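/- arXiv:1103.0674 — 2 statements merged into one kernel-verified Lean document; each statement's English description precedes it below -/
import Mathlib

section
/- Let f: [0,T] → ℝ² be a curve f(t) = (r(t), y(t)) with r, y absolutely continuous and nondecreasing, r(t) ≥ ε for t ∈ [ε,T], y(t) ≤ −ε for t ∈ [0, T−ε], and set h₀ = ε/(2M) with M ≥ 1 and 0 < ε. Define the shifted polar angle α̂(t) = π/2 + arctan((y(t)+h₀)/r(t)). If moreover r'(t) + y'(t) > 0 a.e., r(t) = t and 0 ≤ y'(t) ≤ M a.e. on [0,ε], and y(t) = t − T and 0 ≤ r'(t) ≤ M a.e. on [T−ε, T], then α̂ is strictly increasing on [0,T]. -/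
/-!
Write `h₀ = ε / (2M)` and `g = (y + h₀) / r`, so that `α̂ = π/2 + arctan g` wherever `r > 0`,
i.e. on `(0, T]`. Since `r(0) = 0`, the junk value `α̂(0) = 0` lies below `π/2 + arctan g`,
so it suffices that `g` is strictly increasing on `(0, T]`, i.e. that the numerator
`y' r - (y + h₀) r'` of `g'` is positive. For `t ≤ T - ε` we have `y + h₀ ≤ -ε/2 < 0`, so both
terms are nonnegative and `r' + y' > 0` makes one of them positive. For `t > T - ε` we have
`y' = 1`, `y + h₀ ≤ h₀` and `r' ≤ M`, so the numerator is at least `r - h₀ M ≥ ε - ε/2`.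
-/

open Set Filter Topology

lemma MonotoneOn.deriv_nonneg_of_mem_nhds {f : ℝ → ℝ} {s : Set ℝ} {t : ℝ}
    (hf : MonotoneOn f s) (hs : s ∈ 𝓝 t) : 0 ≤ deriv f t := by
  rw [← derivWithin_of_mem_nhds hs]
  exact hf.derivWithin_nonneg

lemma strictMonoOn_div_of_deriv_mul_sub_mul_deriv_pos {D : Set ℝ} (hD : Convex ℝ D)
    {f g : ℝ → ℝ} (hf : ContinuousOn f D) (hg : ContinuousOn g D) (hg0 : ∀ x ∈ D, g x ≠ 0)
    (hfd : ∀ x ∈ interior D, DifferentiableAt ℝ f x)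
    (hgd : ∀ x ∈ interior D, DifferentiableAt ℝ g x)
    (hpos : ∀ x ∈ interior D, 0 < deriv f x * g x - f x * deriv g x) :
    StrictMonoOn (fun x => f x / g x) D := by
  refine strictMonoOn_of_deriv_pos hD (hf.div hg hg0) fun x hx => ?_
  have hgx := hg0 x (interior_subset hx)
  rw [((hfd x hx).hasDerivAt.fun_div (hgd x hx).hasDerivAt hgx).deriv]
  exact div_pos (hpos x hx) (sq_pos_of_ne_zero hgx)

lemma strictMonoOn_Icc_of_Ioc {α β : Type*} [LinearOrder α] [Preorder β] {f : α → β} {a b : α}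
    (hf : StrictMonoOn f (Ioc a b)) (ha : ∀ t ∈ Ioc a b, f a < f t) :
    StrictMonoOn f (Icc a b) := by
  intro s hs t ht hst
  rcases eq_or_lt_of_le hs.1 with rfl | has
  · exact ha t ⟨hst, ht.2⟩
  · exact hf ⟨has, hs.2⟩ ⟨has.trans hst, ht.2⟩ hst

lemma mul_sub_mul_pos_of_neg {r z r' y' : ℝ} (hr : 0 < r) (hz : z < 0) (hr' : 0 ≤ r')
    (hy' : 0 ≤ y') (hsum : 0 < r' + y') : 0 < y' * r - z * r' := by
  rcases hr'.eq_or_lt with rfl | hr'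
  · nlinarith
  · nlinarith [mul_pos (neg_pos.2 hz) hr', mul_nonneg hy' hr.le]

lemma sub_mul_pos_of_mul_lt {r z r' h M ε : ℝ} (hr : ε ≤ r) (hz : z ≤ h) (hh : 0 ≤ h)
    (hr' : 0 ≤ r') (hr'M : r' ≤ M) (hhM : h * M < ε) : 0 < r - z * r' := by
  have : z * r' ≤ h * M :=
    (mul_le_mul_of_nonneg_right hz hr').trans (mul_le_mul_of_nonneg_left hr'M hh)
  linarith

lemma angle_numerator_pos {ε M T : ℝ} (hε : 0 < ε) (hM : 1 ≤ M) (hT : 2 * ε ≤ T)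
    {r y : ℝ → ℝ} (hrm : MonotoneOn r (Icc 0 T)) (hym : MonotoneOn y (Icc 0 T))
    (hrε : ∀ t ∈ Icc ε T, ε ≤ r t) (hyε : ∀ t ∈ Icc 0 (T - ε), y t ≤ -ε)
    (hpos : ∀ t ∈ Ioo 0 T, 0 < deriv r t + deriv y t)
    (hyT : ∀ t ∈ Icc (T - ε) T, y t = t - T) (hrM : ∀ t ∈ Ioo (T - ε) T, deriv r t ≤ M)
    {t : ℝ} (ht : t ∈ Ioo 0 T) (hrt : 0 < r t) :
    0 < deriv y t * r t - (y t + ε / (2 * M)) * deriv r t := by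
  have hh₀ : 0 < ε / (2 * M) := by positivity
  have hh₀M : ε / (2 * M) * M = ε / 2 := by field_simp
  have hr' := hrm.deriv_nonneg_of_mem_nhds (Icc_mem_nhds ht.1 ht.2)
  rcases le_or_gt t (T - ε) with hlow | hhigh
  · have hy' := hym.deriv_nonneg_of_mem_nhds (Icc_mem_nhds ht.1 ht.2)
    have hyt := hyε t ⟨ht.1.le, hlow⟩
    exact mul_sub_mul_pos_of_neg hrt (by nlinarith) hr' hy' (hpos t ht)
  · have hy' : deriv y t = 1 := by
      have hyeq : y =ᶠ[𝓝 t] fun s => s - T := by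
        filter_upwards [Ioo_mem_nhds hhigh ht.2] with s hs using hyT s ⟨hs.1.le, hs.2.le⟩
      simp [hyeq.deriv_eq]
    rw [hy', one_mul]
    have hyt : y t + ε / (2 * M) ≤ ε / (2 * M) := by linarith [hyT t ⟨hhigh.le, ht.2.le⟩, ht.2]
    exact sub_mul_pos_of_mul_lt (hrε t ⟨by linarith, ht.2.le⟩) hyt hh₀.le hr'
      (hrM t ⟨hhigh, ht.2⟩) (by linarith)

theorem stmt_14_general (ε M T : ℝ) (hε : 0 < ε) (hM : 1 ≤ M) (hT : 2 * ε ≤ T)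
    (r y : ℝ → ℝ)
    (hrc : ContinuousOn r (Set.Icc 0 T)) (hyc : ContinuousOn y (Set.Icc 0 T))
    (hrm : MonotoneOn r (Set.Icc 0 T)) (hym : MonotoneOn y (Set.Icc 0 T))
    (hdiff : ∀ t ∈ Set.Ioo 0 T, DifferentiableAt ℝ r t ∧ DifferentiableAt ℝ y t)
    (hrε : ∀ t ∈ Set.Icc ε T, ε ≤ r t)
    (hyε : ∀ t ∈ Set.Icc 0 (T - ε), y t ≤ -ε)
    (hpos : ∀ t ∈ Set.Ioo 0 T, 0 < deriv r t + deriv y t)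
    (hr0 : ∀ t ∈ Set.Icc 0 ε, r t = t)
    (hyT : ∀ t ∈ Set.Icc (T - ε) T, y t = t - T)
    (hrM : ∀ t ∈ Set.Ioo (T - ε) T, deriv r t ≤ M) :
    StrictMonoOn (fun t =>
        if r t = 0 then 0
        else Real.pi / 2 + Real.arctan ((y t + ε / (2 * M)) / r t))
      (Set.Icc 0 T) := by
  have hrpos : ∀ t ∈ Ioc 0 T, 0 < r t := fun t ht =>
    (le_or_gt t ε).elim (fun h => (hr0 t ⟨ht.1.le, h⟩).symm ▸ ht.1)
      fun h => hε.trans_le (hrε t ⟨h.le, ht.2⟩)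
  have hg : StrictMonoOn (fun t => (y t + ε / (2 * M)) / r t) (Ioc 0 T) := by
    refine strictMonoOn_div_of_deriv_mul_sub_mul_deriv_pos (convex_Ioc 0 T)
      ((hyc.mono Ioc_subset_Icc_self).add continuousOn_const) (hrc.mono Ioc_subset_Icc_self)
      (fun t ht => (hrpos t ht).ne') ?_ ?_ ?_ <;> rw [interior_Ioc] <;> intro t ht
    · exact (hdiff t ht).2.add_const _
    · exact (hdiff t ht).1
    · rw [deriv_add_const]
      exact angle_numerator_pos hε hM hT hrm hym hrε hyε hpos hyT hrM ht (hrpos t ⟨ht.1, ht.2.le⟩)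
  refine strictMonoOn_Icc_of_Ioc (fun s hs t ht hst => ?_) fun t ht => ?_
  · simp only [if_neg (hrpos s hs).ne', if_neg (hrpos t ht).ne']
    linarith [Real.arctan_strictMono (hg hs ht hst)]
  · simp only [hr0 0 ⟨le_rfl, hε.le⟩, if_pos, if_neg (hrpos t ht).ne']
    linarith [Real.neg_pi_div_two_lt_arctan ((y t + ε / (2 * M)) / r t)]

/-- Core computation of Lemma `angle`: for a nondecreasing curve `(r(t), y(t))`, `t ∈ [0,T]`,
as in the definition of the class `𝒟`, the shifted polar angle
`α̂(t) = π/2 + arctan((y(t)+h₀)/r(t))` (with `h₀ = ε/(2M)`, and with value `0` on the axis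
`r = 0`) is strictly increasing on `[0,T]`. -/
theorem stmt_14 (ε M T : ℝ) (hε : 0 < ε) (hM : 1 ≤ M) (hT : 2 * ε ≤ T)
    (r y : ℝ → ℝ)
    (hrc : ContinuousOn r (Set.Icc 0 T)) (hyc : ContinuousOn y (Set.Icc 0 T))
    (hrm : MonotoneOn r (Set.Icc 0 T)) (hym : MonotoneOn y (Set.Icc 0 T))
    (hdiff : ∀ t ∈ Set.Ioo 0 T, DifferentiableAt ℝ r t ∧ DifferentiableAt ℝ y t)
    (hrε : ∀ t ∈ Set.Icc ε T, ε ≤ r t)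
    (hyε : ∀ t ∈ Set.Icc 0 (T - ε), y t ≤ -ε)
    (hpos : ∀ t ∈ Set.Ioo 0 T, 0 < deriv r t + deriv y t)
    (hr0 : ∀ t ∈ Set.Icc 0 ε, r t = t)
    (hyM : ∀ t ∈ Set.Ioo 0 ε, deriv y t ≤ M)
    (hyT : ∀ t ∈ Set.Icc (T - ε) T, y t = t - T)
    (hrM : ∀ t ∈ Set.Ioo (T - ε) T, deriv r t ≤ M) :
    StrictMonoOn (fun t =>
        if r t = 0 then 0
        else Real.pi / 2 + Real.arctan ((y t + ε / (2 * M)) / r t))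
      (Set.Icc 0 T) :=
  stmt_14_general ε M T hε hM hT r y hrc hyc hrm hym hdiff hrε hyε hpos hr0 hyT hrM
end

section
/- Let a > 0 and let ψ_s: D_s → ℝ be a family of functions, s in a neighborhood of q ∈ [0,1], such that each ∂ψ_s/∂y is Lipschitz on D_s ∩ R with Lipschitz constant a (R a fixed rectangle on which r ≥ r₁/2 > 0), each set D_s ∩ D_q ∩ R satisfies |B(p,δ) ∩ D_s ∩ D_q ∩ R| ≥ cδ² for all p ∈ D_s ∩ D_q ∩ R and δ ∈ (0,1) with a constant c > 0, and ∫_{D_s ∩ D_q} r|∂ψ_s/∂y − ∂ψ_q/∂y|² → 0 as s → q. Then sup over D_s ∩ D_q ∩ R of |∂ψ_s/∂y − ∂ψ_q/∂y| → 0 as s → q. -/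
/-! `F = ∂ψ_s/∂y - ∂ψ_q/∂y` is `2a`-Lipschitz on `S = D_s ∩ D_q ∩ R`. If `|F p| > η` at some
`p ∈ S`, then `|F| ≥ η/2` on `B(p, δ) ∩ S` once `2aδ ≤ η/2`; by the density condition this set has
measure at least `cδ²`, and `r ≥ r₁/2` on it, so the weighted `L²` distance is at least
`(r₁/2)(η/2)² cδ²`, a fixed positive number, which fails for `s` close to `q`. -/

open MeasureTheory Filter Set Metric Topology
open scoped NNReal

theorem NNReal.exists_mem_Ioo_mul_le (L : ℝ≥0) {ε : ℝ} (hε : 0 < ε) :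
    ∃ δ ∈ Ioo (0 : ℝ) 1, L * δ ≤ ε := by
  have hsmall : ∀ᶠ δ in 𝓝[>] (0 : ℝ), L * δ ≤ ε :=
    nhdsWithin_le_nhds <| (continuous_const_mul (L : ℝ)).tendsto' 0 0 (mul_zero _) |>.eventually
      (ge_mem_nhds hε)
  exact (hsmall.and (Ioo_mem_nhdsGT one_pos)).exists.imp fun δ h => ⟨h.2, h.1⟩

theorem LipschitzOnWith.abs_sub_mul_dist_le_abs {X : Type*} [PseudoMetricSpace X] {F : X → ℝ}
    {S : Set X} {L : ℝ≥0} (hF : LipschitzOnWith L F S) {x p : X} (hx : x ∈ S) (hp : p ∈ S) :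
    |F p| - L * dist x p ≤ |F x| := by
  have := hF.dist_le_mul x hx p hp
  rw [Real.dist_eq] at this
  linarith [abs_sub_abs_le_abs_sub (F p) (F x), abs_sub_comm (F p) (F x)]

section

variable {X : Type*} [MeasurableSpace X] {μ : Measure X}

theorem MeasureTheory.mul_measureReal_le_setIntegral {f : X → ℝ} {s : Set X} {c : ℝ}
    (hs : MeasurableSet s) (hc : 0 ≤ c) (hf : ∀ x ∈ s, c ≤ f x) (hfint : IntegrableOn f s μ) :
    c * μ.real s ≤ ∫ x in s, f x ∂μ := by
  by_cases hμs : μ s = ⊤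
  · simpa [Measure.real, hμs] using setIntegral_nonneg hs fun x hx => hc.trans (hf x hx)
  · exact setIntegral_ge_of_const_le_real hs hμs hf hfint

variable [PseudoMetricSpace X] [OpensMeasurableSpace X]

theorem LipschitzOnWith.abs_le_of_setIntegral_lt {F w : X → ℝ} {S T : Set X} {L : ℝ≥0}
    {m η δ v : ℝ} {p : X} (hF : LipschitzOnWith L F S) (hS : MeasurableSet S)
    (hT : MeasurableSet T) (hST : S ⊆ T) (hwS : ∀ x ∈ S, m ≤ w x) (hwT : ∀ x ∈ T, 0 ≤ w x)
    (hm : 0 ≤ m) (hη : 0 ≤ η) (hint : IntegrableOn (fun x => w x * |F x| ^ 2) T μ)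
    (hp : p ∈ S) (hδ : L * δ ≤ η / 2) (hv : v ≤ μ.real (ball p δ ∩ S))
    (hsmall : ∫ x in T, w x * |F x| ^ 2 ∂μ < m * (η / 2) ^ 2 * v) :
    |F p| ≤ η := by
  by_contra! hFp
  have hlow : ∀ x ∈ ball p δ ∩ S, m * (η / 2) ^ 2 ≤ w x * |F x| ^ 2 := by
    rintro x ⟨hxp, hxS⟩
    have hFx : η / 2 ≤ |F x| := by
      have := hF.abs_sub_mul_dist_le_abs hxS hp
      linarith [mul_le_mul_of_nonneg_left (mem_ball.1 hxp).le L.coe_nonneg]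
    exact mul_le_mul (hwS x hxS) (pow_le_pow_left₀ (by positivity) hFx 2) (by positivity)
      (hm.trans (hwS x hxS))
  have hsub : ball p δ ∩ S ⊆ T := inter_subset_right.trans hST
  have : m * (η / 2) ^ 2 * v ≤ ∫ x in T, w x * |F x| ^ 2 ∂μ :=
    calc m * (η / 2) ^ 2 * v ≤ m * (η / 2) ^ 2 * μ.real (ball p δ ∩ S) := by gcongr
      _ ≤ ∫ x in ball p δ ∩ S, w x * |F x| ^ 2 ∂μ :=
        mul_measureReal_le_setIntegral (measurableSet_ball.inter hS) (by positivity) hlow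
          (hint.mono_set hsub)
      _ ≤ ∫ x in T, w x * |F x| ^ 2 ∂μ := by
        refine setIntegral_mono_set hint ?_ hsub.eventuallyLE
        filter_upwards [ae_restrict_mem hT] with x hx using mul_nonneg (hwT x hx) (sq_nonneg _)
  linarith

end

theorem stmt_16_general (a c r₁ q : ℝ) (hc : 0 < c) (hr₁ : 0 < r₁)
    (D : ℝ → Set (ℝ × ℝ)) (R : Set (ℝ × ℝ))
    (hDm : ∀ s, MeasurableSet (D s)) (hRm : MeasurableSet R)
    (hR : ∀ p ∈ R, r₁ / 2 ≤ p.1)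
    (ψ : ℝ → (ℝ × ℝ) → ℝ)
    (hLip : ∀ᶠ s in nhds q, LipschitzOnWith (Real.toNNReal a)
      (fun p => fderiv ℝ (ψ s) p (0, 1)) (D s ∩ R))
    (hD : ∀ᶠ s in nhds q, D s ⊆ {p : ℝ × ℝ | 0 ≤ p.1})
    (hdens : ∀ᶠ s in nhds q, ∀ p ∈ D s ∩ D q ∩ R, ∀ δ ∈ Set.Ioo (0 : ℝ) 1,
      c * δ ^ 2 ≤ (volume (Metric.ball p δ ∩ (D s ∩ D q ∩ R))).toReal)
    (hint : ∀ᶠ s in nhds q, IntegrableOn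
      (fun p => p.1 * |fderiv ℝ (ψ s) p (0, 1) - fderiv ℝ (ψ q) p (0, 1)| ^ 2)
      (D s ∩ D q))
    (hL2 : Tendsto (fun s => ∫ p in D s ∩ D q,
        p.1 * |fderiv ℝ (ψ s) p (0, 1) - fderiv ℝ (ψ q) p (0, 1)| ^ 2)
      (nhds q) (nhds 0)) :
    ∀ η > 0, ∀ᶠ s in nhds q, ∀ p ∈ D s ∩ D q ∩ R,
      |fderiv ℝ (ψ s) p (0, 1) - fderiv ℝ (ψ q) p (0, 1)| ≤ η := by
  intro η hη
  obtain ⟨δ, hδ, hLδ⟩ := (a.toNNReal + a.toNNReal).exists_mem_Ioo_mul_le (half_pos hη)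
  have hε : 0 < r₁ / 2 * (η / 2) ^ 2 * (c * δ ^ 2) := by
    have := hδ.1
    positivity
  have hLipq := hLip.self_of_nhds
  filter_upwards [hLip, hD, hdens, hint, hL2.eventually (gt_mem_nhds hε)]
    with s hLips hDs hdenss hints hsmall p hp
  have hF : LipschitzOnWith (a.toNNReal + a.toNNReal)
      (fun p => fderiv ℝ (ψ s) p (0, 1) - fderiv ℝ (ψ q) p (0, 1)) (D s ∩ D q ∩ R) :=
    (hLips.mono fun x hx => ⟨hx.1.1, hx.2⟩).sub (hLipq.mono fun x hx => ⟨hx.1.2, hx.2⟩)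
  exact hF.abs_le_of_setIntegral_lt (((hDm s).inter (hDm q)).inter hRm) ((hDm s).inter (hDm q))
    inter_subset_left (fun x hx => hR x hx.2) (fun x hx => hDs hx.1) (by positivity) hη.le
    hints hp hLδ (hdenss p hp δ hδ) hsmall

/-- Lemma `lem:limit`: uniform Lipschitz bounds for `∂ψ_s/∂y` on `D_s ∩ R`, a measure density
(corkscrew) condition for the sets `D_s ∩ D_q ∩ R`, and `L²` convergence of
`∂ψ_s/∂y → ∂ψ_q/∂y` (with weight `r`) together imply uniform convergence on
`D_s ∩ D_q ∩ R`. -/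
theorem stmt_16 (a c r₁ q : ℝ) (ha : 0 < a) (hc : 0 < c) (hr₁ : 0 < r₁)
    (hq : q ∈ Set.Icc (0 : ℝ) 1)
    (D : ℝ → Set (ℝ × ℝ)) (R : Set (ℝ × ℝ))
    (hDm : ∀ s, MeasurableSet (D s)) (hRm : MeasurableSet R)
    (hR : ∀ p ∈ R, r₁ / 2 ≤ p.1)
    (ψ : ℝ → (ℝ × ℝ) → ℝ)
    (hLip : ∀ᶠ s in nhds q, LipschitzOnWith (Real.toNNReal a)
      (fun p => fderiv ℝ (ψ s) p (0, 1)) (D s ∩ R))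
    (hD : ∀ᶠ s in nhds q, D s ⊆ {p : ℝ × ℝ | 0 ≤ p.1})
    (hdens : ∀ᶠ s in nhds q, ∀ p ∈ D s ∩ D q ∩ R, ∀ δ ∈ Set.Ioo (0 : ℝ) 1,
      c * δ ^ 2 ≤ (volume (Metric.ball p δ ∩ (D s ∩ D q ∩ R))).toReal)
    (hint : ∀ᶠ s in nhds q, IntegrableOn
      (fun p => p.1 * |fderiv ℝ (ψ s) p (0, 1) - fderiv ℝ (ψ q) p (0, 1)| ^ 2)
      (D s ∩ D q))
    (hL2 : Tendsto (fun s => ∫ p in D s ∩ D q,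
        p.1 * |fderiv ℝ (ψ s) p (0, 1) - fderiv ℝ (ψ q) p (0, 1)| ^ 2)
      (nhds q) (nhds 0)) :
    ∀ η > 0, ∀ᶠ s in nhds q, ∀ p ∈ D s ∩ D q ∩ R,
      |fderiv ℝ (ψ s) p (0, 1) - fderiv ℝ (ψ q) p (0, 1)| ≤ η :=
  stmt_16_general a c r₁ q hc hr₁ D R hDm hRm hR ψ hLip hD hdens hint hL2
end
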